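/- For γ > 0 define L_γ : ℝ² → ℝ by L_γ(u,v) = (1/2)(u − sin v)² + (γ/2)(u − v)². Then inf L_γ = 0, and at the point (ū, v̄) with ū = 2γπ/(1+γ) and v̄ = 2π one has ∇L_γ(ū, v̄) = 0 while L_γ(ū, v̄) > 0. Consequently, for every γ > 0 there is no μ > 0 such that ‖∇L_γ(u,v)‖² ≥ 2μ(L_γ(u,v) − inf L_γ) holds for all (u,v) ∈ ℝ²; the penalized objective of Example 1 fails the joint PL condition for every penalty parameter γ. -/

import Mathlib

/-- The penalized objective `L_γ(u,v) = ½(u - sin v)² + (γ/2)(u - v)²` of Example 1. -/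
noncomputable def LEx1 (γ : ℝ) : EuclideanSpace ℝ (Fin 2) → ℝ :=
  fun p => 1 / 2 * (p 0 - Real.sin (p 1)) ^ 2 + γ / 2 * (p 0 - p 1) ^ 2

/-!
`L_γ ≥ 0` vanishes at the origin, so `inf L_γ = 0`. At `(ū, v̄)` we have `sin v̄ = 0` and
`cos v̄ = 1`, so both partial derivatives equal `±(ū + γ(ū - v̄))`, which vanishes by the
choice of `ū`; but `L_γ(ū, v̄) ≥ ū²/2 > 0`. A critical point above the infimum rules out
every PL inequality, which at that point reads `2μ(L_γ(ū, v̄) - inf L_γ) ≤ 0`.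
-/

open Real

theorem not_exists_PL_of_hasGradientAt_zero {E : Type*} [NormedAddCommGroup E]
    [InnerProductSpace ℝ E] [CompleteSpace E] {f : E → ℝ} {x : E}
    (hx : HasGradientAt f 0 x) (hlt : ⨅ q, f q < f x) :
    ¬ ∃ μ : ℝ, 0 < μ ∧ ∀ p, 2 * μ * (f p - ⨅ q, f q) ≤ ‖gradient f p‖ ^ 2 := by
  rintro ⟨μ, hμ, hPL⟩
  have hx_PL := hPL x
  rw [hx.gradient, norm_zero] at hx_PL
  nlinarith

section LEx1

variable {γ : ℝ}

theorem LEx1_nonneg (hγ : 0 ≤ γ) (p : EuclideanSpace ℝ (Fin 2)) : 0 ≤ LEx1 γ p := by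
  unfold LEx1
  positivity

theorem iInf_LEx1 (hγ : 0 ≤ γ) : ⨅ p : EuclideanSpace ℝ (Fin 2), LEx1 γ p = 0 := by
  refine le_antisymm ?_ (le_ciInf (LEx1_nonneg hγ))
  calc ⨅ p, LEx1 γ p
      ≤ LEx1 γ 0 := ciInf_le ⟨0, by rintro _ ⟨p, rfl⟩; exact LEx1_nonneg hγ p⟩ 0
    _ = 0 := by simp [LEx1]

theorem hasGradientAt_LEx1 (γ : ℝ) (p : EuclideanSpace ℝ (Fin 2)) :
    HasGradientAt (LEx1 γ)
      !₂[(p 0 - sin (p 1)) + γ * (p 0 - p 1),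
        -((p 0 - sin (p 1)) * cos (p 1)) - γ * (p 0 - p 1)] p := by
  have hu := (EuclideanSpace.proj (𝕜 := ℝ) (0 : Fin 2)).hasFDerivAt (x := p)
  have hv := (EuclideanSpace.proj (𝕜 := ℝ) (1 : Fin 2)).hasFDerivAt (x := p)
  have hL : HasFDerivAt (LEx1 γ) _ p :=
    (((hu.sub hv.sin).pow 2).const_mul (1 / 2)).add (((hu.sub hv).pow 2).const_mul (γ / 2))
  refine hL.congr_fderiv ?_
  ext q
  simp only [one_div, Fin.isValue, EuclideanSpace.coe_proj, PiLp.proj_apply, Pi.sub_apply,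
    Nat.add_one_sub_one, pow_one, nsmul_eq_mul, Nat.cast_ofNat, add_apply,
    smul_apply, sub_apply, smul_eq_mul,
    InnerProductSpace.toDual_apply_apply, PiLp.inner_apply, RCLike.inner_apply, ringHom_apply,
    Fin.sum_univ_two, Matrix.cons_val_zero, Matrix.cons_val_one, Matrix.cons_val_fin_one]
  ring

end LEx1

/-- **Lemma 5 (Appendix C.2).**
For every `γ > 0`, the penalized objective `L_γ(u,v) = ½(u - sin v)² + (γ/2)(u - v)²`
has infimum `0`, yet at `(ū, v̄) = (2γπ/(1+γ), 2π)` its gradient vanishes while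
`L_γ(ū, v̄) > 0`. Consequently there is no `μ > 0` such that
`‖∇L_γ(u,v)‖² ≥ 2μ (L_γ(u,v) - inf L_γ)` holds for all `(u,v)`: the penalized objective
of Example 1 fails the joint PL condition for every penalty parameter `γ`. -/
theorem stmt_5 (γ : ℝ) (hγ : 0 < γ) :
    (⨅ p : EuclideanSpace ℝ (Fin 2), LEx1 γ p) = 0 ∧
    HasGradientAt (LEx1 γ) 0
      (!₂[2 * γ * Real.pi / (1 + γ), 2 * Real.pi] : EuclideanSpace ℝ (Fin 2)) ∧
    0 < LEx1 γ (!₂[2 * γ * Real.pi / (1 + γ), 2 * Real.pi] : EuclideanSpace ℝ (Fin 2)) ∧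
    ¬ ∃ μ : ℝ, 0 < μ ∧ ∀ p : EuclideanSpace ℝ (Fin 2),
      2 * μ * (LEx1 γ p - ⨅ q : EuclideanSpace ℝ (Fin 2), LEx1 γ q) ≤
        ‖gradient (LEx1 γ) p‖ ^ 2 := by
  set ū := 2 * γ * π / (1 + γ)
  have hū_pos : 0 < ū := by positivity
  have hū : ū + γ * (ū - 2 * π) = 0 := by
    simp only [ū]; field_simp; ring
  have hcrit : HasGradientAt (LEx1 γ) 0 !₂[ū, 2 * π] := by
    convert hasGradientAt_LEx1 γ !₂[ū, 2 * π] using 1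
    ext i; fin_cases i <;>
      simp only [Fin.zero_eta, Fin.mk_one, Fin.isValue, PiLp.zero_apply, Matrix.cons_val_zero,
        Matrix.cons_val_one, Matrix.cons_val_fin_one, sin_two_pi, sub_zero, cos_two_pi,
        mul_one] <;>
      linarith
  have hpos : 0 < LEx1 γ !₂[ū, 2 * π] := by
    have hval : LEx1 γ !₂[ū, 2 * π] = ū ^ 2 / 2 + γ / 2 * (ū - 2 * π) ^ 2 := by
      simp only [LEx1, Matrix.cons_val_zero, Matrix.cons_val_one, Matrix.cons_val_fin_one,
        sin_two_pi, sub_zero]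
      ring
    rw [hval]
    positivity
  have hinf := iInf_LEx1 hγ.le
  exact ⟨hinf, hcrit, hpos, not_exists_PL_of_hasGradientAt_zero hcrit (hinf ▸ hpos)⟩
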